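/- arXiv:1410.2394 — 5 statements merged into one kernel-verified Lean document; each statement's English description precedes it below -/
import Mathlib

section
/- Let 0<q<1 and let T = CS on ℓ²(ℤ₊) (S the shift, C eₙ = (1−q^{2n})^{1/2} eₙ). Then C = ((1−q^{-2})I + q^{-2} T*T)^{1/2}, and consequently the C*-algebra generated by T contains C and S (where S = f(C)T with f the continuous function on σ(C) with f(0)=0 and f(t)=t^{-1} for t≠0), hence C*(T) = C*(S). -/
/-!
On the basis, `C²` is diagonal with eigenvalues `1 - q^{2n}` and `T* T = S* C² S` with
eigenvalues `1 - q^{2(n+1)}`; this gives the formula for `C` as the positive square root of `C²`.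

Since `1 - C² = ∑ q^{2n} Pₙ` converges in norm, where `Pₙ = Sⁿ S*ⁿ - Sⁿ⁺¹ S*ⁿ⁺¹` is the
projection onto `e n`, both `C²` and `C = √(C²)` lie in `C*(S)`. Conversely, `|T| = S* C S` is
diagonal with eigenvalues `√(1 - q^{2(n+1)}) ≥ √(1 - q²) > 0`, hence invertible; it lies in
`C*(T)` as the square root of `T* T`, and the polar decomposition `T = S |T|` gives
`S = T |T|⁻¹ ∈ C*(T)`.
-/

open ContinuousLinearMap InnerProductSpace StarAlgebra
open scoped InnerProductSpace

theorem StarSubalgebra.mem_of_nonneg_of_mul_self_mem {A : Type*} [CStarAlgebra A] [PartialOrder A]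
    [StarOrderedRing A] {s : StarSubalgebra ℂ A} (hs : IsClosed (s : Set A)) {a : A} (ha : 0 ≤ a)
    (h : a * a ∈ s) : a ∈ s := by
  have : IsClosed (s : Set A) := hs
  have haa : 0 ≤ a * a := ha.isSelfAdjoint.mul_self_nonneg
  rw [← CFC.sqrt_mul_self a ha, CFC.sqrt_eq_real_sqrt _ haa, cfcₙ_eq_cfc]
  exact cfc_mem _ h

theorem StarSubalgebra.ring_inverse_mem {A : Type*} [CStarAlgebra A] {s : StarSubalgebra ℂ A}
    (hs : IsClosed (s : Set A)) {a : A} (ha : a ∈ s) (hu : IsUnit a) : Ring.inverse a ∈ s := by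
  have : IsClosed (s : Set A) := hs
  -- spectral permanence: `a` is already invertible in `s`
  obtain ⟨u, hua⟩ := (s.coe_isUnit (a := ⟨a, ha⟩)).mp hu
  have : a = (Units.map (s.subtype : s →* A) u : A) := by simp [hua]
  rw [this, Ring.inverse_unit]
  exact (u⁻¹ : sˣ).val.prop

namespace HilbertBasis

variable {ι 𝕜 E : Type*} [RCLike 𝕜] [NormedAddCommGroup E] [InnerProductSpace 𝕜 E]
  (e : HilbertBasis ι 𝕜 E)

theorem ext_inner_left {x y : E} (h : ∀ i, ⟪e i, x⟫_𝕜 = ⟪e i, y⟫_𝕜) : x = y :=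
  e.repr.injective <| by ext i; simp only [HilbertBasis.repr_apply_apply, h]

theorem ext {F : Type*} [NormedAddCommGroup F] [NormedSpace 𝕜 F] {A B : E →L[𝕜] F}
    (h : ∀ i, A (e i) = B (e i)) : A = B :=
  ext_on (Submodule.dense_iff_topologicalClosure_eq_top.mpr e.dense_span) <| by
    rintro _ ⟨i, rfl⟩
    exact h i

variable [CompleteSpace E] {A : E →L[𝕜] E} {d : ι → ℝ}

theorem isSelfAdjoint_of_apply_eq_smul (hA : ∀ i, A (e i) = (d i : 𝕜) • e i) :
    IsSelfAdjoint A := by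
  classical
  refine isSelfAdjoint_iff'.mpr <| e.ext fun i => e.ext_inner_left fun j => ?_
  rw [adjoint_inner_right, hA, hA, inner_smul_left, inner_smul_right, RCLike.conj_ofReal,
    orthonormal_iff_ite.mp e.orthonormal]
  split_ifs with h <;> simp [h]

theorem nonneg_of_apply_eq_smul (hd : ∀ i, 0 ≤ d i) (hA : ∀ i, A (e i) = (d i : 𝕜) • e i) :
    0 ≤ A := by
  have hsa := e.isSelfAdjoint_of_apply_eq_smul hA
  refine (nonneg_iff_isPositive A).mpr (isPositive_def.mpr ⟨hsa.isSymmetric, fun x => ?_⟩)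
  have hsum := (e.hasSum_inner_mul_inner (A x) x).mapL RCLike.reCLM
  refine hsum.nonneg fun i => ?_
  have : ⟪A x, e i⟫_𝕜 * ⟪e i, x⟫_𝕜 = ((d i * ‖⟪e i, x⟫_𝕜‖ ^ 2 : ℝ) : 𝕜) := by
    rw [← adjoint_inner_right, isSelfAdjoint_iff'.mp hsa, hA, inner_smul_right, ← inner_conj_symm,
      mul_assoc, RCLike.conj_mul]
    push_cast
    ring
  simp only [RCLike.reCLM_apply, this, RCLike.ofReal_re]
  exact mul_nonneg (hd i) (sq_nonneg _)

theorem hasSum_rankOne_of_apply_eq_smul {d : ι → 𝕜} (hd : Summable fun i => ‖d i‖)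
    (hA : ∀ i, A (e i) = d i • e i) : HasSum (fun i => d i • rankOne 𝕜 (e i) (e i)) A := by
  classical
  have hs : Summable fun i => d i • rankOne 𝕜 (e i) (e i) :=
    hd.of_norm_bounded fun i => by simp [norm_smul, e.orthonormal.1 i]
  convert hs.hasSum
  refine e.ext fun j => ?_
  rw [hA, ← ContinuousLinearMap.apply_apply (e j), ← hs.hasSum.mapL (apply 𝕜 E (e j)) |>.tsum_eq]
  simp only [apply_apply, smul_apply, rankOne_apply, orthonormal_iff_ite.mp e.orthonormal]
  rw [tsum_eq_single j fun b hb => by simp [hb]]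
  simp

end HilbertBasis

theorem HilbertBasis.isUnit_of_apply_eq_smul {ι E : Type*} [NormedAddCommGroup E]
    [InnerProductSpace ℂ E] [CompleteSpace E] (e : HilbertBasis ι ℂ E) {A : E →L[ℂ] E}
    {d : ι → ℝ} {c : ℝ} (hc : 0 < c) (hd : ∀ i, c ≤ d i)
    (hA : ∀ i, A (e i) = (d i : ℂ) • e i) : IsUnit A := by
  refine CStarAlgebra.isUnit_of_le (algebraMap ℝ _ c) ?_ (isStrictlyPositive_algebraMap hc)
  rw [← sub_nonneg]
  refine e.nonneg_of_apply_eq_smul (d := fun i => d i - c) (fun i => sub_nonneg.mpr (hd i))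
    fun i => ?_
  simp [hA, sub_smul, Algebra.algebraMap_eq_smul_one]

section Shift

variable {𝕜 E : Type*} [RCLike 𝕜] [NormedAddCommGroup E] [InnerProductSpace 𝕜 E]
  {e : HilbertBasis ℕ 𝕜 E} {S : E →L[𝕜] E}

theorem shift_pow_apply (hS : ∀ n, S (e n) = e (n + 1)) (k n : ℕ) : (S ^ k) (e n) = e (n + k) := by
  induction k with
  | zero => simp
  | succ k ih => rw [pow_succ', mul_apply_eq_comp, ih, hS, add_assoc]

variable [CompleteSpace E]

theorem adjoint_shift_pow_apply (hS : ∀ n, S (e n) = e (n + 1)) (k n : ℕ) :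
    adjoint (S ^ k) (e n) = if k ≤ n then e (n - k) else 0 := by
  refine e.ext_inner_left fun m => ?_
  rw [adjoint_inner_right, shift_pow_apply hS, orthonormal_iff_ite.mp e.orthonormal]
  split_ifs <;> simp [orthonormal_iff_ite.mp e.orthonormal] <;> omega

theorem shift_pow_mul_adjoint_apply (hS : ∀ n, S (e n) = e (n + 1)) (k n : ℕ) :
    (S ^ k * adjoint (S ^ k)) (e n) = if k ≤ n then e n else 0 := by
  rw [mul_apply_eq_comp, adjoint_shift_pow_apply hS]
  split_ifs with h
  · rw [shift_pow_apply hS, Nat.sub_add_cancel h]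
  · exact map_zero _

theorem rankOne_basis_eq_shift_pow (hS : ∀ n, S (e n) = e (n + 1)) (n : ℕ) :
    rankOne 𝕜 (e n) (e n) = S ^ n * adjoint (S ^ n) - S ^ (n + 1) * adjoint (S ^ (n + 1)) := by
  refine e.ext fun m => ?_
  rw [sub_apply, shift_pow_mul_adjoint_apply hS, shift_pow_mul_adjoint_apply hS, rankOne_apply,
    orthonormal_iff_ite.mp e.orthonormal]
  rcases lt_trichotomy n m with h | rfl | h
  · simp [h.ne, h.le, Nat.succ_le_of_lt h]
  · simp
  · simp [h.ne', not_le.mpr h, not_le.mpr (Nat.lt_succ_of_lt h)]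

theorem adjoint_shift_apply_succ (hS : ∀ n, S (e n) = e (n + 1)) (n : ℕ) :
    adjoint S (e (n + 1)) = e n := by
  simpa using adjoint_shift_pow_apply hS 1 (n + 1)

end Shift

theorem mul_self_apply_of_apply_eq_sqrt {E : Type*} [NormedAddCommGroup E] [NormedSpace ℂ E]
    {C : E →L[ℂ] E} {v : E} {w : ℝ} (hw : 0 ≤ w) (hC : C v = (Real.sqrt w : ℂ) • v) :
    (C * C) v = (w : ℂ) • v := by
  rw [mul_apply_eq_comp, hC, map_smul, hC, smul_smul, ← Complex.ofReal_mul, Real.mul_self_sqrt hw]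

section WeightedShift

variable {E : Type*} [NormedAddCommGroup E] [InnerProductSpace ℂ E] [CompleteSpace E]
  {e : HilbertBasis ℕ ℂ E} {S C : E →L[ℂ] E} {w : ℕ → ℝ}

theorem adjoint_mul_self_weightedShift_apply (hS : ∀ n, S (e n) = e (n + 1))
    (hC : ∀ n, C (e n) = (Real.sqrt (w n) : ℂ) • e n) {n : ℕ} (hw : 0 ≤ w (n + 1)) :
    (adjoint (C * S) * (C * S)) (e n) = (w (n + 1) : ℂ) • e n := by
  rw [← star_eq_adjoint, star_mul, (e.isSelfAdjoint_of_apply_eq_smul hC).star_eq, star_eq_adjoint,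
    mul_assoc, mul_apply_eq_comp, ← mul_assoc, mul_apply_eq_comp,
    hS, mul_self_apply_of_apply_eq_sqrt hw (hC _), map_smul, adjoint_shift_apply_succ hS]

theorem adjoint_shift_mul_mul_shift_apply (hS : ∀ n, S (e n) = e (n + 1))
    (hC : ∀ n, C (e n) = (Real.sqrt (w n) : ℂ) • e n) (n : ℕ) :
    (adjoint S * C * S) (e n) = (Real.sqrt (w (n + 1)) : ℂ) • e n := by
  rw [mul_apply_eq_comp, mul_apply_eq_comp, hS, hC, map_smul, adjoint_shift_apply_succ hS]

theorem shift_mem_elemental_weightedShift {c : ℝ} (hc : 0 < c) (hw : ∀ n, c ≤ w (n + 1))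
    (hS : ∀ n, S (e n) = e (n + 1)) (hC : ∀ n, C (e n) = (Real.sqrt (w n) : ℂ) • e n) :
    S ∈ elemental ℂ (C * S) := by
  have hA := adjoint_shift_mul_mul_shift_apply hS hC
  have hwn (n : ℕ) : 0 ≤ w (n + 1) := hc.le.trans (hw n)
  have hAA : (adjoint S * C * S) * (adjoint S * C * S) = star (C * S) * (C * S) :=
    e.ext fun n => by
      rw [star_eq_adjoint, adjoint_mul_self_weightedShift_apply hS hC (hwn n),
        mul_self_apply_of_apply_eq_sqrt (hwn n) (hA n)]
  have hTA : C * S = S * (adjoint S * C * S) := e.ext fun n => by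
    rw [mul_apply_eq_comp, mul_apply_eq_comp, hA, map_smul, hS, hC]
  have hA_mem : adjoint S * C * S ∈ elemental ℂ (C * S) :=
    StarSubalgebra.mem_of_nonneg_of_mul_self_mem (elemental.isClosed ℂ _)
      (e.nonneg_of_apply_eq_smul (fun _ => Real.sqrt_nonneg _) hA)
      (hAA ▸ mul_mem (elemental.star_self_mem ℂ _) (elemental.self_mem ℂ _))
  have hA_unit : IsUnit (adjoint S * C * S) :=
    e.isUnit_of_apply_eq_smul (Real.sqrt_pos.mpr hc) (fun n => Real.sqrt_le_sqrt (hw n)) hA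
  have hS_eq : S = C * S * Ring.inverse (adjoint S * C * S) := by
    rw [hTA, mul_assoc, Ring.mul_inverse_cancel _ hA_unit, mul_one]
  have hmem : C * S * Ring.inverse (adjoint S * C * S) ∈ elemental ℂ (C * S) :=
    mul_mem (elemental.self_mem ℂ _)
      (StarSubalgebra.ring_inverse_mem (elemental.isClosed ℂ _) hA_mem hA_unit)
  rwa [← hS_eq] at hmem

theorem mem_elemental_shift_of_apply_eq_sqrt (hw : ∀ n, 0 ≤ w n)
    (hsum : Summable fun n => |1 - w n|) (hS : ∀ n, S (e n) = e (n + 1))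
    (hC : ∀ n, C (e n) = (Real.sqrt (w n) : ℂ) • e n) :
    C ∈ elemental ℂ S := by
  have hdiag (n : ℕ) : (1 - C * C) (e n) = ((1 - w n : ℝ) : ℂ) • e n := by
    rw [sub_apply, one_apply_eq_self, mul_self_apply_of_apply_eq_sqrt (hw n) (hC n),
      Complex.ofReal_sub, Complex.ofReal_one, sub_smul, one_smul]
  have hsum' : Summable fun n => ‖((1 - w n : ℝ) : ℂ)‖ := by
    simpa only [Complex.norm_real, Real.norm_eq_abs] using hsum
  have hproj (k : ℕ) : S ^ k * adjoint (S ^ k) ∈ elemental ℂ S := by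
    rw [← star_eq_adjoint]
    exact mul_mem (pow_mem (elemental.self_mem ℂ S) k)
      (star_mem (pow_mem (elemental.self_mem ℂ S) k))
  have hmem : 1 - C * C ∈ elemental ℂ S := by
    rw [← (e.hasSum_rankOne_of_apply_eq_smul hsum' hdiag).tsum_eq]
    refine tsum_mem (elemental.isClosed ℂ S) fun n => ?_
    rw [rankOne_basis_eq_shift_pow hS]
    exact SMulMemClass.smul_mem _ (sub_mem (hproj n) (hproj (n + 1)))
  refine StarSubalgebra.mem_of_nonneg_of_mul_self_mem (elemental.isClosed ℂ S)
    (e.nonneg_of_apply_eq_smul (fun _ => Real.sqrt_nonneg _) hC) ?_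
  simpa using sub_mem (one_mem _) hmem

end WeightedShift

/-- For `T = CS` on ℓ²(ℤ₊), one has
`C = ((1−q^{-2})·I + q^{-2} T*T)^{1/2}` (square root via the continuous functional
calculus), and the unital C*-algebras generated by `T = CS` and by `S` coincide:
`C*(T) = C*(S)` (the closed star subalgebra generated by a single element). -/
theorem stmt5 {H : Type*} [NormedAddCommGroup H] [InnerProductSpace ℂ H] [CompleteSpace H]
    (q : ℝ) (hq0 : 0 < q) (hq1 : q < 1)
    (e : HilbertBasis ℕ ℂ H)
    (S C : H →L[ℂ] H)
    (hS : ∀ n : ℕ, S (e n) = e (n + 1))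
    (hC : ∀ n : ℕ, C (e n) = ((Real.sqrt (1 - q ^ (2 * n)) : ℝ) : ℂ) • e n) :
    C = CFC.sqrt (((1 - q⁻¹ ^ 2 : ℝ) : ℂ) • (1 : H →L[ℂ] H)
          + ((q⁻¹ ^ 2 : ℝ) : ℂ) • (ContinuousLinearMap.adjoint (C * S) * (C * S)))
      ∧ C ∈ StarAlgebra.elemental ℂ (C * S)
      ∧ S ∈ StarAlgebra.elemental ℂ (C * S)
      ∧ StarAlgebra.elemental ℂ (C * S) = StarAlgebra.elemental ℂ S := by
  have hw (n : ℕ) : 0 ≤ 1 - q ^ (2 * n) := sub_nonneg.mpr (pow_le_one₀ hq0.le hq1.le)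
  have hq2 : q ^ 2 < 1 := by nlinarith
  have hCS : C ∈ elemental ℂ S :=
    mem_elemental_shift_of_apply_eq_sqrt hw (by
      simpa [pow_mul, abs_of_pos hq0] using summable_geometric_of_lt_one (sq_nonneg q) hq2) hS hC
  have hST : S ∈ elemental ℂ (C * S) :=
    shift_mem_elemental_weightedShift (sub_pos.mpr hq2)
      (fun n => sub_le_sub_left (pow_le_pow_of_le_one hq0.le hq1.le (by omega)) 1) hS hC
  have heq : elemental ℂ (C * S) = elemental ℂ S :=
    le_antisymm
      (elemental.le_of_mem (elemental.isClosed ℂ S)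
        (mul_mem hCS (elemental.self_mem ℂ S)))
      (elemental.le_of_mem (elemental.isClosed ℂ _) hST)
  refine ⟨?_, heq ▸ hCS, hST, heq⟩
  have hCC : ((1 - q⁻¹ ^ 2 : ℝ) : ℂ) • (1 : H →L[ℂ] H)
      + ((q⁻¹ ^ 2 : ℝ) : ℂ) • (adjoint (C * S) * (C * S)) = C * C := e.ext fun n => by
    rw [add_apply, smul_apply, smul_apply, one_apply_eq_self,
      adjoint_mul_self_weightedShift_apply hS hC (hw _),
      mul_self_apply_of_apply_eq_sqrt (hw n) (hC n), smul_smul, ← add_smul,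
      ← Complex.ofReal_mul, ← Complex.ofReal_add]
    congr 2
    field_simp [hq0.ne']
    ring
  rw [hCC, CFC.sqrt_mul_self C (e.nonneg_of_apply_eq_smul (fun _ => Real.sqrt_nonneg _) hC)]
end

section
/- Let 0<q<1 and φ₁,φ₂ ∈ [0,2π). Define on ℓ²(ℤ₊): Z₂² = CS, Z₂¹ = e^{iφ₁} d(q), Z₁² = e^{iφ₂} d(q), Z₁¹ = −e^{i(φ₁+φ₂)} q^{-1} S*C (where S is the shift, C eₙ = (1−q^{2n})^{1/2} eₙ, d(q) eₙ = qⁿ eₙ). Then these operators satisfy Σ_{j=1}^{2} q^{4−α−β} Z_j^α (Z_j^β)* = δ^{αβ} I for all α,β ∈ {1,2}. -/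
/-!
All four relations hold in any complex *-algebra for elements `S, C, D` with `S⋆S = 1`,
`SS⋆C = C`, `C, D` self-adjoint and commuting, `C² + D² = 1` and `DS = q SD`; each is then a
short computation, e.g. `S⋆C²S = S⋆(1 - D²)S = 1 - q²D²`. On `ℓ²` these properties of the
shift and of the two diagonal operators are checked on the basis vectors (`C e₀ = 0` gives
`SS⋆C = C`). The mixed relations are adjoint to each other.
-/

namespace HilbertBasis

open ContinuousLinearMap ComplexConjugate

variable {ι 𝕜 E F : Type*} [RCLike 𝕜] [NormedAddCommGroup E] [InnerProductSpace 𝕜 E]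

theorem ext_inner (b : HilbertBasis ι 𝕜 E) {x y : E} (h : ∀ i, inner 𝕜 (b i) x = inner 𝕜 (b i) y) :
    x = y :=
  b.repr.injective <| lp.ext <| funext fun i => by simpa only [b.repr_apply_apply] using h i

theorem ext_continuousLinearMap [NormedAddCommGroup F] [NormedSpace 𝕜 F] (b : HilbertBasis ι 𝕜 E)
    {f g : E →L[𝕜] F} (h : ∀ i, f (b i) = g (b i)) : f = g :=
  ext_on (Submodule.dense_iff_topologicalClosure_eq_top.mpr b.dense_span) <| by
    rintro _ ⟨i, rfl⟩
    exact h i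

theorem commute_of_apply_eq_smul (b : HilbertBasis ι 𝕜 E) {A B : E →L[𝕜] E} {a c : ι → 𝕜}
    (hA : ∀ i, A (b i) = a i • b i) (hB : ∀ i, B (b i) = c i • b i) : Commute A B :=
  b.ext_continuousLinearMap fun i => by simp [hA, hB, smul_smul, mul_comm]

theorem mul_self_add_mul_self_eq_one (b : HilbertBasis ι 𝕜 E) {A B : E →L[𝕜] E} {a c : ι → 𝕜}
    (hA : ∀ i, A (b i) = a i • b i) (hB : ∀ i, B (b i) = c i • b i)
    (h : ∀ i, a i * a i + c i * c i = 1) : A * A + B * B = 1 :=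
  b.ext_continuousLinearMap fun i => by simp [hA, hB, smul_smul, ← add_smul, h]

theorem mul_shift_eq_smul_shift_mul (b : HilbertBasis ℕ 𝕜 E) {S : E →L[𝕜] E}
    (hS : ∀ n, S (b n) = b (n + 1)) {A : E →L[𝕜] E} {a : ℕ → 𝕜} {c : 𝕜} (hA : ∀ n, A (b n) = a n • b n) (ha : ∀ n, a (n + 1) = c * a n) :
    A * S = c • (S * A) :=
  b.ext_continuousLinearMap fun n => by simp [hS, hA, ha, smul_smul]

variable [CompleteSpace E]

theorem adjoint_apply_of_apply_eq_smul (b : HilbertBasis ι 𝕜 E) {A : E →L[𝕜] E} {a : ι → 𝕜}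
    (hA : ∀ i, A (b i) = a i • b i) (i : ι) : adjoint A (b i) = conj (a i) • b i := by
  classical
  refine b.ext_inner fun j => ?_
  rw [adjoint_inner_right, hA, inner_smul_left, inner_smul_right,
    orthonormal_iff_ite.mp b.orthonormal]
  split_ifs with hji
  · rw [hji]
  · simp

theorem isSelfAdjoint_of_apply_eq_ofReal_smul (b : HilbertBasis ι 𝕜 E) {A : E →L[𝕜] E}
    {a : ι → ℝ} (hA : ∀ i, A (b i) = (a i : 𝕜) • b i) : IsSelfAdjoint A :=
  (star_eq_adjoint A).trans <| b.ext_continuousLinearMap fun i => by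
    rw [b.adjoint_apply_of_apply_eq_smul hA, RCLike.conj_ofReal, hA]

section Shift

variable (b : HilbertBasis ℕ 𝕜 E) {S : E →L[𝕜] E}

theorem adjoint_shift_apply_succ (hS : ∀ n, S (b n) = b (n + 1)) (n : ℕ) :
    adjoint S (b (n + 1)) = b n := by
  classical
  refine b.ext_inner fun i => ?_
  rw [adjoint_inner_right, hS, orthonormal_iff_ite.mp b.orthonormal,
    orthonormal_iff_ite.mp b.orthonormal]
  simp

theorem adjoint_shift_apply_zero (hS : ∀ n, S (b n) = b (n + 1)) : adjoint S (b 0) = 0 := by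
  classical
  refine b.ext_inner fun i => ?_
  rw [adjoint_inner_right, hS, orthonormal_iff_ite.mp b.orthonormal, inner_zero_right]
  simp

theorem adjoint_shift_mul_shift (hS : ∀ n, S (b n) = b (n + 1)) : adjoint S * S = 1 :=
  b.ext_continuousLinearMap fun n => by
    simp [hS, b.adjoint_shift_apply_succ hS]

theorem shift_mul_adjoint_shift_mul_of_apply_zero (hS : ∀ n, S (b n) = b (n + 1))
    {A : E →L[𝕜] E} {a : ℕ → 𝕜} (hA : ∀ n, A (b n) = a n • b n) (ha : a 0 = 0) : S * adjoint S * A = A :=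
  b.ext_continuousLinearMap fun n => by
    cases n with
    | zero => simp [hA, ha]
    | succ n => simp [hA, b.adjoint_shift_apply_succ hS, hS]

end Shift

end HilbertBasis

section StarAlgebra

open ComplexConjugate

variable {A : Type*} [Ring A] [StarRing A] [Algebra ℂ A] {q : ℝ} {u₁ u₂ : ℂ} {S C D : A}

theorem star_mul_mul_self_mul_of_mul_eq_smul (hS : star S * S = 1)
    (hDS : D * S = (q : ℂ) • (S * D)) : star S * (D * D) * S = ((q ^ 2 : ℝ) : ℂ) • (D * D) :=
  calc star S * (D * D) * S = star S * (D * (D * S)) := by simp only [mul_assoc]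
    _ = ((q : ℂ) * q) • (star S * S * (D * D)) := by
      rw [hDS, mul_smul_comm, ← mul_assoc D S, hDS]
      simp only [smul_mul_assoc, mul_smul_comm, smul_smul, mul_assoc]
    _ = ((q ^ 2 : ℝ) : ℂ) • (D * D) := by rw [hS, one_mul]; push_cast; ring_nf

variable [StarModule ℂ A]

theorem boundary_relation_one_one (hq : q ≠ 0) (hu₁ : star u₁ * u₁ = 1)
    (hu₂ : star u₂ * u₂ = 1) (hC : IsSelfAdjoint C) (hD : IsSelfAdjoint D)
    (hCD : C * C + D * D = 1) (hS : star S * S = 1) (hDS : D * S = (q : ℂ) • (S * D)) :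
    ((q ^ 2 : ℝ) : ℂ) • ((-(u₁ * u₂) * ((q⁻¹ : ℝ) : ℂ)) • (star S * C) *
        star ((-(u₁ * u₂) * ((q⁻¹ : ℝ) : ℂ)) • (star S * C))
      + (u₁ • D) * star (u₁ • D)) = 1 := by
  have hc : ((q ^ 2 : ℝ) : ℂ) * (-(u₁ * u₂) * ((q⁻¹ : ℝ) : ℂ) *
      (star ((q⁻¹ : ℝ) : ℂ) * star (-(u₁ * u₂)))) = 1 := by
    have hq' : (q : ℂ) ≠ 0 := by exact_mod_cast hq
    simp only [star_neg, star_mul', Complex.star_def, Complex.conj_ofReal] at hu₁ hu₂ ⊢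
    push_cast
    field_simp
    linear_combination (u₂ * conj u₂) * hu₁ + hu₂
  have hSCCS : star S * C * (C * S) = 1 - ((q ^ 2 : ℝ) : ℂ) • (D * D) := by
    rw [mul_assoc, ← mul_assoc C, eq_sub_of_add_eq hCD, sub_mul, one_mul, mul_sub, hS,
      ← mul_assoc, star_mul_mul_self_mul_of_mul_eq_smul hS hDS]
  have hu : u₁ * star u₁ = 1 := by rw [mul_comm, hu₁]
  simp only [star_smul, star_mul, star_star, hC.star_eq, hD.star_eq, smul_mul_smul, smul_add,
    smul_smul, hu, hc, one_smul, hSCCS]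
  abel

theorem boundary_relation_one_two (hq : q ≠ 0) (hu₂ : star u₂ * u₂ = 1) (hC : IsSelfAdjoint C)
    (hD : IsSelfAdjoint D) (hcomm : Commute C D) (hDS : D * S = (q : ℂ) • (S * D)) :
    ((q : ℝ) : ℂ) • ((-(u₁ * u₂) * ((q⁻¹ : ℝ) : ℂ)) • (star S * C) * star (u₂ • D)
      + (u₁ • D) * star (C * S)) = 0 := by
  have hSD : star S * D = (q : ℂ) • (D * star S) := by
    simpa only [star_mul, star_smul, hD.star_eq, Complex.star_def, Complex.conj_ofReal]
      using congrArg star hDS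
  have hSCD : star S * C * D = (q : ℂ) • (D * (star S * C)) := by
    rw [mul_assoc, hcomm.eq, ← mul_assoc, hSD, smul_mul_assoc, mul_assoc]
  have hc : star u₂ * (-(u₁ * u₂) * ((q⁻¹ : ℝ) : ℂ) * q) + u₁ = 0 := by
    have hq' : (q : ℂ) ≠ 0 := by exact_mod_cast hq
    push_cast
    field_simp
    linear_combination -u₁ * hu₂
  simp only [star_smul, star_mul, hC.star_eq, hD.star_eq, smul_mul_assoc, mul_smul_comm, hSCD,
    smul_smul, ← add_smul, hc, zero_smul, smul_zero]

theorem boundary_relation_two_one (hq : q ≠ 0) (hu₂ : star u₂ * u₂ = 1) (hC : IsSelfAdjoint C)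
    (hD : IsSelfAdjoint D) (hcomm : Commute C D) (hDS : D * S = (q : ℂ) • (S * D)) :
    ((q : ℝ) : ℂ) • ((u₂ • D) * star ((-(u₁ * u₂) * ((q⁻¹ : ℝ) : ℂ)) • (star S * C))
      + (C * S) * star (u₁ • D)) = 0 := by
  rw [← star_zero A, ← boundary_relation_one_two (u₁ := u₁) hq hu₂ hC hD hcomm hDS]
  simp only [star_smul, star_add, star_mul, star_star, hC.star_eq, hD.star_eq, smul_mul_assoc,
    mul_smul_comm, RCLike.star_def, Complex.conj_ofReal, Complex.conj_conj]
  module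

theorem boundary_relation_two_two (hu₂ : star u₂ * u₂ = 1) (hC : IsSelfAdjoint C)
    (hD : IsSelfAdjoint D) (hCD : C * C + D * D = 1) (hSSC : S * star S * C = C) :
    (u₂ • D) * star (u₂ • D) + (C * S) * star (C * S) = 1 := by
  have hu : u₂ * star u₂ = 1 := by rw [mul_comm, hu₂]
  rw [← hCD, star_smul, smul_mul_smul, hu, one_smul, hD.star_eq, star_mul, hC.star_eq,
    mul_assoc C, ← mul_assoc S, hSSC, add_comm]

end StarAlgebra

theorem star_exp_ofReal_mul_I_mul_self (θ : ℝ) :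
    star (Complex.exp (θ * Complex.I)) * Complex.exp (θ * Complex.I) = 1 := by
  rw [Complex.star_def, Complex.conj_mul', Complex.norm_exp_ofReal_mul_I,
    Complex.ofReal_one, one_pow]

theorem stmt8_general {H : Type*} [NormedAddCommGroup H] [InnerProductSpace ℂ H] [CompleteSpace H]
    (q : ℝ) (hq0 : 0 < q) (hq1 : q < 1)
    (φ₁ φ₂ : ℝ)
    (e : HilbertBasis ℕ ℂ H)
    (S C D : H →L[ℂ] H)
    (hS : ∀ n : ℕ, S (e n) = e (n + 1))
    (hC : ∀ n : ℕ, C (e n) = ((Real.sqrt (1 - q ^ (2 * n)) : ℝ) : ℂ) • e n)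
    (hD : ∀ n : ℕ, D (e n) = ((q ^ n : ℝ) : ℂ) • e n)
    (Z11 Z12 Z21 Z22 : H →L[ℂ] H)
    (hZ22 : Z22 = C * S)
    (hZ21 : Z21 = Complex.exp (φ₁ * Complex.I) • D)
    (hZ12 : Z12 = Complex.exp (φ₂ * Complex.I) • D)
    (hZ11 : Z11 = (-Complex.exp ((φ₁ + φ₂) * Complex.I) * ((q⁻¹ : ℝ) : ℂ)) •
      (ContinuousLinearMap.adjoint S * C)) :
    ((q ^ 2 : ℝ) : ℂ) • (Z11 * ContinuousLinearMap.adjoint Z11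
        + Z21 * ContinuousLinearMap.adjoint Z21) = 1
    ∧ ((q : ℝ) : ℂ) • (Z11 * ContinuousLinearMap.adjoint Z12
        + Z21 * ContinuousLinearMap.adjoint Z22) = 0
    ∧ ((q : ℝ) : ℂ) • (Z12 * ContinuousLinearMap.adjoint Z11
        + Z22 * ContinuousLinearMap.adjoint Z21) = 0
    ∧ (Z12 * ContinuousLinearMap.adjoint Z12
        + Z22 * ContinuousLinearMap.adjoint Z22) = 1 := by
  have hq : q ≠ 0 := hq0.ne'
  have hCsa : IsSelfAdjoint C := e.isSelfAdjoint_of_apply_eq_ofReal_smul hC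
  have hDsa : IsSelfAdjoint D := e.isSelfAdjoint_of_apply_eq_ofReal_smul hD
  have hCD : C * C + D * D = 1 := e.mul_self_add_mul_self_eq_one hC hD fun n => by
    rw [← Complex.ofReal_mul, Real.mul_self_sqrt (sub_nonneg.mpr (pow_le_one₀ hq0.le hq1.le))]
    push_cast
    ring
  have hSS : star S * S = 1 := by
    rw [ContinuousLinearMap.star_eq_adjoint, e.adjoint_shift_mul_shift hS]
  have hSSC : S * star S * C = C := by
    rw [ContinuousLinearMap.star_eq_adjoint]
    exact e.shift_mul_adjoint_shift_mul_of_apply_zero hS hC (by simp)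
  have hDS : D * S = (q : ℂ) • (S * D) :=
    e.mul_shift_eq_smul_shift_mul hS hD fun n => by push_cast; ring
  have hexp : Complex.exp ((φ₁ + φ₂) * Complex.I)
      = Complex.exp (φ₁ * Complex.I) * Complex.exp (φ₂ * Complex.I) := by
    rw [← Complex.exp_add, add_mul]
  have hu₁ := star_exp_ofReal_mul_I_mul_self φ₁
  have hu₂ := star_exp_ofReal_mul_I_mul_self φ₂
  have hcomm := e.commute_of_apply_eq_smul hC hD
  subst hZ11 hZ12 hZ21 hZ22
  simp only [← ContinuousLinearMap.star_eq_adjoint, hexp]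
  exact ⟨boundary_relation_one_one hq hu₁ hu₂ hCsa hDsa hCD hSS hDS,
    boundary_relation_one_two hq hu₂ hCsa hDsa hcomm hDS,
    boundary_relation_two_one hq hu₂ hCsa hDsa hcomm hDS,
    boundary_relation_two_two hu₂ hCsa hDsa hCD hSSC⟩

/-- The operators of the representation ρ_{φ₁,φ₂} of Pol(Mat₂)_q,
`Z₂² = CS`, `Z₂¹ = e^{iφ₁} d(q)`, `Z₁² = e^{iφ₂} d(q)`, `Z₁¹ = −e^{i(φ₁+φ₂)} q^{-1} S*C`,
satisfy `Σ_{j=1}^{2} q^{4−α−β} Z_j^α (Z_j^β)* = δ^{αβ} I` for all α,β ∈ {1,2}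
(i.e. they annihilate the generators of the boundary ideal J). -/
theorem stmt8 {H : Type*} [NormedAddCommGroup H] [InnerProductSpace ℂ H] [CompleteSpace H]
    (q : ℝ) (hq0 : 0 < q) (hq1 : q < 1)
    (φ₁ φ₂ : ℝ) (hφ₁ : φ₁ ∈ Set.Ico 0 (2 * Real.pi)) (hφ₂ : φ₂ ∈ Set.Ico 0 (2 * Real.pi))
    (e : HilbertBasis ℕ ℂ H)
    (S C D : H →L[ℂ] H)
    (hS : ∀ n : ℕ, S (e n) = e (n + 1))
    (hC : ∀ n : ℕ, C (e n) = ((Real.sqrt (1 - q ^ (2 * n)) : ℝ) : ℂ) • e n)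
    (hD : ∀ n : ℕ, D (e n) = ((q ^ n : ℝ) : ℂ) • e n)
    (Z11 Z12 Z21 Z22 : H →L[ℂ] H)
    (hZ22 : Z22 = C * S)
    (hZ21 : Z21 = Complex.exp (φ₁ * Complex.I) • D)
    (hZ12 : Z12 = Complex.exp (φ₂ * Complex.I) • D)
    (hZ11 : Z11 = (-Complex.exp ((φ₁ + φ₂) * Complex.I) * ((q⁻¹ : ℝ) : ℂ)) •
      (ContinuousLinearMap.adjoint S * C)) :
    ((q ^ 2 : ℝ) : ℂ) • (Z11 * ContinuousLinearMap.adjoint Z11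
        + Z21 * ContinuousLinearMap.adjoint Z21) = 1
    ∧ ((q : ℝ) : ℂ) • (Z11 * ContinuousLinearMap.adjoint Z12
        + Z21 * ContinuousLinearMap.adjoint Z22) = 0
    ∧ ((q : ℝ) : ℂ) • (Z12 * ContinuousLinearMap.adjoint Z11
        + Z22 * ContinuousLinearMap.adjoint Z21) = 0
    ∧ (Z12 * ContinuousLinearMap.adjoint Z12
        + Z22 * ContinuousLinearMap.adjoint Z22) = 1 :=
  stmt8_general q hq0 hq1 φ₁ φ₂ e S C D hS hC hD Z11 Z12 Z21 Z22 hZ22 hZ21 hZ12 hZ11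
end

section
/- Let 0<q<1. Define the *-homomorphism data Π_φ on the generators of Pol(Mat₂)_q by Π_φ(z₁¹) = q^{-1} z, Π_φ(z₁²) = Π_φ(z₂¹) = 0, Π_φ(z₂²) = e^{iφ}, where z is the generator of Pol(ℂ)_q (relation z*z = q² z z* + (1−q²)). Then this assignment respects all the defining relations of Pol(Mat₂)_q, hence extends uniquely to a unital *-homomorphism Π_φ: Pol(Mat₂)_q → Pol(ℂ)_q. -/
/-- The assignment Π_φ(z₁¹) = q^{-1} z, Π_φ(z₁²) = Π_φ(z₂¹) = 0,
Π_φ(z₂²) = e^{iφ}·1, where z is the generator of Pol(ℂ)_q (so z*z = q² z z* + (1−q²)·1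
holds in any unital *-algebra realization of Pol(ℂ)_q), respects all defining relations
(ff1)–(ff3) of Pol(Mat₂)_q; hence it extends (uniquely) to a unital *-homomorphism
Π_φ : Pol(Mat₂)_q → Pol(ℂ)_q. -/
theorem stmt11 {A : Type*} [Ring A] [Algebra ℂ A] [StarRing A] [StarModule ℂ A]
    (q : ℝ) (hq0 : 0 < q) (hq1 : q < 1)
    (φ : ℝ) (hφ : φ ∈ Set.Ico 0 (2 * Real.pi))
    (z : A) (hz : star z * z = ((q ^ 2 : ℝ) : ℂ) • (z * star z) + ((1 - q ^ 2 : ℝ) : ℂ) • 1)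
    (w11 w12 w21 w22 : A)
    (hw11 : w11 = ((q⁻¹ : ℝ) : ℂ) • z)
    (hw12 : w12 = 0) (hw21 : w21 = 0)
    (hw22 : w22 = Complex.exp (φ * Complex.I) • (1 : A)) :
    -- relations (ff1)
    w11 * w21 = ((q : ℝ) : ℂ) • (w21 * w11)
    ∧ w21 * w12 = w12 * w21
    ∧ w11 * w12 = ((q : ℝ) : ℂ) • (w12 * w11)
    ∧ w21 * w22 = ((q : ℝ) : ℂ) • (w22 * w21)
    ∧ w11 * w22 - w22 * w11 = ((q - q⁻¹ : ℝ) : ℂ) • (w12 * w21)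
    ∧ w12 * w22 = ((q : ℝ) : ℂ) • (w22 * w12)
    -- relations (ff2)
    ∧ star w11 * w11
        = ((q ^ 2 : ℝ) : ℂ) • (w11 * star w11)
          - ((1 - q ^ 2 : ℝ) : ℂ) • (w21 * star w21 + w12 * star w12)
          + ((q⁻¹ ^ 2 * (1 - q ^ 2) ^ 2 : ℝ) : ℂ) • (w22 * star w22)
          + ((1 - q ^ 2 : ℝ) : ℂ) • 1
    ∧ star w21 * w21
        = ((q ^ 2 : ℝ) : ℂ) • (w21 * star w21)
          - ((1 - q ^ 2 : ℝ) : ℂ) • (w22 * star w22) + ((1 - q ^ 2 : ℝ) : ℂ) • 1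
    ∧ star w12 * w12
        = ((q ^ 2 : ℝ) : ℂ) • (w12 * star w12)
          - ((1 - q ^ 2 : ℝ) : ℂ) • (w22 * star w22) + ((1 - q ^ 2 : ℝ) : ℂ) • 1
    ∧ star w22 * w22
        = ((q ^ 2 : ℝ) : ℂ) • (w22 * star w22) + ((1 - q ^ 2 : ℝ) : ℂ) • 1
    -- relations (ff3)
    ∧ star w11 * w21 - ((q : ℝ) : ℂ) • (w21 * star w11)
        = ((q - q⁻¹ : ℝ) : ℂ) • (w22 * star w12)
    ∧ star w22 * w21 = ((q : ℝ) : ℂ) • (w21 * star w22)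
    ∧ star w11 * w12 - ((q : ℝ) : ℂ) • (w12 * star w11)
        = ((q - q⁻¹ : ℝ) : ℂ) • (w22 * star w21)
    ∧ star w22 * w12 = ((q : ℝ) : ℂ) • (w12 * star w22)
    ∧ star w11 * w22 = w22 * star w11
    ∧ star w21 * w12 = w12 * star w21 := by
  subst hw11 hw12 hw21 hw22
  have hqne : (q:ℂ) ≠ 0 := by exact_mod_cast hq0.ne'
  have he : (starRingEnd ℂ) (Complex.exp (↑φ * Complex.I)) * Complex.exp (↑φ * Complex.I) = 1 := by
    rw [← Complex.exp_conj, ← Complex.exp_add]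
    simp [map_mul, Complex.conj_ofReal, Complex.conj_I]
  have he' : Complex.exp (↑φ * Complex.I) * (starRingEnd ℂ) (Complex.exp (↑φ * Complex.I)) = 1 := by
    rw [mul_comm]; exact he
  refine ⟨by simp, by simp, by simp, by simp, ?_, by simp, ?_, ?_, ?_, ?_, by simp, by simp, by simp, by simp, ?_, by simp⟩
  · simp [smul_smul, mul_smul_comm, smul_mul_assoc, mul_comm]
  · simp only [star_smul, star_one, smul_mul_assoc, mul_smul_comm, smul_smul, Complex.conj_ofReal,
      star_zero, zero_mul, mul_zero, smul_zero, zero_add, add_zero, sub_zero, mul_one, one_mul, he, RCLike.star_def]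
    rw [hz]
    match_scalars <;> push_cast <;> field_simp <;> ring
  · simp only [star_smul, star_one, smul_mul_assoc, mul_smul_comm, smul_smul,
      star_zero, zero_mul, mul_zero, smul_zero, zero_add, add_zero, sub_zero, mul_one, one_mul, he, RCLike.star_def]
    match_scalars <;> push_cast <;> ring
  · simp only [star_smul, star_one, smul_mul_assoc, mul_smul_comm, smul_smul,
      star_zero, zero_mul, mul_zero, smul_zero, zero_add, add_zero, sub_zero, mul_one, one_mul, he, RCLike.star_def]
    match_scalars <;> push_cast <;> ring
  · simp only [star_smul, star_one, smul_mul_assoc, mul_smul_comm, smul_smul, mul_one, one_mul, he, he', RCLike.star_def]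
    match_scalars <;> push_cast <;> ring
  · simp only [star_smul, star_one, smul_mul_assoc, mul_smul_comm, smul_smul, mul_one, one_mul, Complex.conj_ofReal, RCLike.star_def]
    rw [mul_comm]
end

section
/- Let T be a contraction on a Hilbert space H. Then there is a Hilbert space K containing H as a closed subspace and a unitary U on K such that Tⁿ = P_H Uⁿ|_H for all n ∈ ℤ₊, where P_H is the orthogonal projection of K onto H (Sz.-Nagy dilation theorem). -/
/-!
Schäffer's construction. The defect operators `D = √(1 - T*T)` and `D' = √(1 - TT*)` satisfy
`T D = D' T`: the identity `T (1 - T*T) = (1 - TT*) T` passes to polynomials and then, by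
Weierstrass approximation on the spectra, to square roots. This makes the Julia matrix
`[[D', T], [-T*, D]]` unitary. On `ℓ²(ℤ, H)`, let it act on the coordinates `0, 1` after the
bilateral shift; the result is a unitary `U` with `(U x)₀ = D' x₋₁ + T x₀` and `(U x)ₘ = xₘ₋₁` for
`m < 0`. So `U` preserves the sequences vanishing at negative indices, and on them it acts on the
`0`-th coordinate as `T`; hence `(Uⁿ δ₀ h)₀ = Tⁿ h`.
-/

open ContinuousLinearMap
open scoped lp ENNReal

section CStarAlgebra

open Polynomial

variable {A : Type*} [CStarAlgebra A]

lemma SemiconjBy.aeval {x a b : A} (h : SemiconjBy x a b) (p : ℝ[X]) :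
    SemiconjBy x (aeval a p) (aeval b p) := by
  induction p using Polynomial.induction_on' with
  | add p q hp hq => simpa only [map_add] using hp.add_right hq
  | monomial n r =>
    rw [aeval_monomial, aeval_monomial]
    exact SemiconjBy.mul_right (Algebra.commute_algebraMap_right r x) (h.pow_right n)

lemma norm_cfc_sub_aeval_le {a : A} (ha : IsSelfAdjoint a) {s : Set ℝ}
    (hs : spectrum ℝ a ⊆ s) {f : ℝ → ℝ} {p : ℝ[X]} {ε : ℝ} (hε : 0 ≤ ε)
    (hp : ∀ t ∈ s, |p.eval t - f t| ≤ ε)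
    (hf : ContinuousOn f (spectrum ℝ a) := by cfc_cont_tac) :
    ‖cfc f a - aeval a p‖ ≤ ε := by
  rw [← cfc_polynomial p a, ← cfc_sub ..]
  refine norm_cfc_le hε fun t ht => ?_
  simpa [Real.norm_eq_abs, abs_sub_comm] using hp t (hs ht)

theorem IsSelfAdjoint.semiconjBy_cfc {x a b : A} (ha : IsSelfAdjoint a) (hb : IsSelfAdjoint b)
    (h : SemiconjBy x a b) {f : ℝ → ℝ} (hf : Continuous f) :
    SemiconjBy x (cfc f a) (cfc f b) := by
  rcases subsingleton_or_nontrivial A with hA | hA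
  · exact Subsingleton.elim _ _
  set r := max ‖a‖ ‖b‖
  have hspec {c : A} (hc : ‖c‖ ≤ r) : spectrum ℝ c ⊆ Set.Icc (-r) r := fun t ht =>
    abs_le.mp ((spectrum.norm_le_norm_of_mem ht).trans hc)
  have key : ∀ ε > 0, ‖x * cfc f a - cfc f b * x‖ ≤ 2 * ‖x‖ * ε := by
    intro ε hε
    obtain ⟨p, hp⟩ := exists_polynomial_near_of_continuousOn (-r) r f hf.continuousOn ε hε
    have hpa := norm_cfc_sub_aeval_le ha (hspec (le_max_left _ _)) hε.le fun t ht => (hp t ht).le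
    have hpb := norm_cfc_sub_aeval_le hb (hspec (le_max_right _ _)) hε.le fun t ht => (hp t ht).le
    calc ‖x * cfc f a - cfc f b * x‖
        = ‖x * (cfc f a - aeval a p) - (cfc f b - aeval b p) * x‖ := by
          rw [mul_sub, sub_mul, (h.aeval p).eq]; abel_nf
      _ ≤ ‖x‖ * ‖cfc f a - aeval a p‖ + ‖cfc f b - aeval b p‖ * ‖x‖ :=
          (norm_sub_le _ _).trans (add_le_add (norm_mul_le _ _) (norm_mul_le _ _))
      _ ≤ ‖x‖ * ε + ε * ‖x‖ := by gcongr
      _ = 2 * ‖x‖ * ε := by ring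
  have hzero : ‖x * cfc f a - cfc f b * x‖ ≤ 0 := by
    refine le_of_forall_pos_le_add fun δ hδ => ?_
    calc ‖x * cfc f a - cfc f b * x‖ ≤ 2 * ‖x‖ * (δ / (2 * ‖x‖ + 1)) := key _ (by positivity)
      _ ≤ 0 + δ := by rw [zero_add, mul_div_assoc', div_le_iff₀ (by positivity)]; linarith
  exact sub_eq_zero.mp (norm_le_zero_iff.mp hzero)

variable [PartialOrder A] [StarOrderedRing A]

lemma one_sub_star_mul_self_nonneg {a : A} (ha : ‖a‖ ≤ 1) : 0 ≤ 1 - star a * a := by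
  rw [sub_nonneg, ← CStarAlgebra.norm_le_one_iff_of_nonneg (star a * a),
    CStarRing.norm_star_mul_self]
  exact mul_le_one₀ ha (norm_nonneg a) ha

namespace SzNagy

noncomputable def defect (a : A) : A := CFC.sqrt (1 - star a * a)

lemma star_defect (a : A) : star (defect a) = defect a :=
  (IsSelfAdjoint.of_nonneg (CFC.sqrt_nonneg _)).star_eq

lemma defect_mul_self {a : A} (ha : ‖a‖ ≤ 1) : defect a * defect a = 1 - star a * a :=
  CFC.sqrt_mul_sqrt_self _ (one_sub_star_mul_self_nonneg ha)

lemma mul_defect {a : A} (ha : ‖a‖ ≤ 1) : a * defect a = defect (star a) * a := by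
  have h₁ := one_sub_star_mul_self_nonneg ha
  have h₂ := one_sub_star_mul_self_nonneg (a := star a) (by rwa [norm_star])
  have hsemi : SemiconjBy a (1 - star a * a) (1 - star (star a) * star a) := by
    simp only [SemiconjBy, star_star]; noncomm_ring
  rw [defect, defect, CFC.sqrt_eq_real_sqrt _ h₁, CFC.sqrt_eq_real_sqrt _ h₂, cfcₙ_eq_cfc,
    cfcₙ_eq_cfc]
  exact (h₁.isSelfAdjoint.semiconjBy_cfc h₂.isSelfAdjoint hsemi Real.continuous_sqrt).eq

lemma defect_mul_star {a : A} (ha : ‖a‖ ≤ 1) : defect a * star a = star a * defect (star a) := by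
  have h := congrArg star (mul_defect ha)
  rwa [star_mul, star_mul, star_defect, star_defect] at h

noncomputable def juliaMatrix (a : A) : Matrix (Fin 2) (Fin 2) A :=
  !![defect (star a), a; -star a, defect a]

theorem juliaMatrix_mem_unitary {a : A} (ha : ‖a‖ ≤ 1) :
    juliaMatrix a ∈ unitary (Matrix (Fin 2) (Fin 2) A) := by
  have h₁ := defect_mul_self ha
  have h₂ := defect_mul_self (a := star a) (by rwa [norm_star])
  have h₃ := mul_defect ha
  have h₄ := defect_mul_star ha
  rw [star_star] at h₂
  rw [Unitary.mem_iff]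
  constructor <;> ext i j <;> fin_cases i <;> fin_cases j <;>
    simp [juliaMatrix, Matrix.mul_apply, Fin.sum_univ_two, star_defect, h₁, h₂, h₃, h₄]

end SzNagy

end CStarAlgebra

section Reindex

variable {𝕜 E α β : Type*} [NormedAddCommGroup E] {p : ℝ≥0∞}

lemma Memℓp.comp_equiv {f : α → E} (hf : Memℓp f p) (e : β ≃ α) : Memℓp (f ∘ e) p := by
  rcases p.trichotomy with rfl | rfl | hp
  · exact memℓp_zero (hf.finite_dsupport.preimage e.injective.injOn)
  · have hrange : Set.range (fun b => ‖(f ∘ e) b‖) = Set.range (fun a => ‖f a‖) :=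
      e.surjective.range_comp (fun a => ‖f a‖)
    exact memℓp_infty (hrange ▸ hf.bddAbove)
  · exact memℓp_gen ((e.summable_iff (f := fun a => ‖f a‖ ^ p.toReal)).mpr (hf.summable hp))

variable [NormedField 𝕜] [NormedSpace 𝕜 E] [Fact (1 ≤ p)]

variable (𝕜 E p) in
noncomputable def LinearIsometryEquiv.lpCongrLeft (e : α ≃ β) :
    ℓ^p(α, E) ≃ₗᵢ[𝕜] ℓ^p(β, E) where
  toFun x := ⟨x ∘ e.symm, (lp.memℓp x).comp_equiv e.symm⟩
  invFun y := ⟨y ∘ e, (lp.memℓp y).comp_equiv e⟩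
  map_add' _ _ := rfl
  map_smul' _ _ := rfl
  left_inv x := lp.ext (funext fun a => congrArg x (e.symm_apply_apply a))
  right_inv y := lp.ext (funext fun b => congrArg y (e.apply_symm_apply b))
  norm_map' x := by
    rcases p.dichotomy with rfl | hp
    · simp only [lp.norm_eq_ciSup]
      exact e.symm.iSup_comp (g := fun a => ‖x a‖)
    · simp only [lp.norm_eq_tsum_rpow (zero_lt_one.trans_le hp)]
      congr 1
      exact e.symm.tsum_eq (fun a => ‖x a‖ ^ p.toReal)

@[simp]
lemma LinearIsometryEquiv.lpCongrLeft_apply (e : α ≃ β) (x : ℓ^p(α, E)) (b : β) :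
    LinearIsometryEquiv.lpCongrLeft 𝕜 E p e x b = x (e.symm b) := rfl

end Reindex

namespace lp

variable {𝕜 E α ι : Type*} [RCLike 𝕜] [NormedAddCommGroup E] [InnerProductSpace 𝕜 E]

@[simp]
lemma evalCLM_apply (a : α) (x : ℓ²(α, E)) : evalCLM 𝕜 (fun _ => E) 2 a x = x a := rfl

variable [DecidableEq α]

lemma adjoint_singleContinuousLinearMap [CompleteSpace E] (a : α) :
    adjoint (singleContinuousLinearMap 𝕜 (fun _ => E) 2 a) = evalCLM 𝕜 (fun _ => E) 2 a := by
  refine ((eq_adjoint_iff _ _).mpr fun x y => ?_).symm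
  simp [inner_single_right]

lemma adjoint_evalCLM [CompleteSpace E] (a : α) :
    adjoint (evalCLM 𝕜 (fun _ => E) 2 a) = singleContinuousLinearMap 𝕜 (fun _ => E) 2 a := by
  rw [← adjoint_singleContinuousLinearMap, adjoint_adjoint]

variable [Fintype ι]

noncomputable def matrixCLM (e : ι ↪ α) (M : Matrix ι ι (E →L[𝕜] E)) :
    ℓ²(α, E) →L[𝕜] ℓ²(α, E) :=
  ∑ i, ∑ j, singleContinuousLinearMap 𝕜 (fun _ => E) 2 (e i) ∘L M i j ∘L evalCLM 𝕜 _ 2 (e j)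

variable (e : ι ↪ α) (M : Matrix ι ι (E →L[𝕜] E)) (x : ℓ²(α, E))

lemma matrixCLM_apply (a : α) :
    matrixCLM e M x a = ∑ i, if a = e i then ∑ j, M i j (x (e j)) else 0 := by
  simp only [matrixCLM, FunLike.coe_sum, Finset.sum_apply, coe_comp, Function.comp_apply,
    coeFn_sum, singleContinuousLinearMap_apply, lp.single_apply, evalCLM_apply, Pi.single_apply]
  simp [Finset.sum_ite_irrel]

lemma matrixCLM_apply_self (i : ι) : matrixCLM e M x (e i) = ∑ j, M i j (x (e j)) := by
  classical
  simp [matrixCLM_apply, e.injective.eq_iff]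

lemma matrixCLM_apply_of_notMem {a : α} (ha : a ∉ Set.range e) : matrixCLM e M x a = 0 := by
  simp_all [matrixCLM_apply, Set.mem_range, eq_comm]

lemma adjoint_matrixCLM [CompleteSpace E] : adjoint (matrixCLM e M) = matrixCLM e (star M) := by
  simp only [matrixCLM, map_sum, adjoint_comp, adjoint_singleContinuousLinearMap, adjoint_evalCLM,
    Matrix.star_apply, star_eq_adjoint, ContinuousLinearMap.comp_assoc]
  exact Finset.sum_comm

variable [DecidableEq ι]

noncomputable def extendMatrixCLM (e : ι ↪ α) (M : Matrix ι ι (E →L[𝕜] E)) :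
    ℓ²(α, E) →L[𝕜] ℓ²(α, E) :=
  1 + matrixCLM e (M - 1)

lemma extendMatrixCLM_apply_self (i : ι) :
    extendMatrixCLM e M x (e i) = ∑ j, M i j (x (e j)) := by
  simp [extendMatrixCLM, matrixCLM_apply_self, Matrix.sub_apply, Matrix.one_apply,
    DFunLike.ite_apply, Finset.sum_sub_distrib]

lemma extendMatrixCLM_apply_of_notMem {a : α} (ha : a ∉ Set.range e) :
    extendMatrixCLM e M x a = x a := by
  simp [extendMatrixCLM, matrixCLM_apply_of_notMem _ _ _ ha]

lemma extendMatrixCLM_mul (N : Matrix ι ι (E →L[𝕜] E)) :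
    extendMatrixCLM e (M * N) = extendMatrixCLM e M * extendMatrixCLM e N := by
  ext1 x
  refine lp.ext (funext fun a => ?_)
  by_cases ha : a ∈ Set.range e
  · obtain ⟨i, rfl⟩ := ha
    simp only [mul_apply_eq_comp, extendMatrixCLM_apply_self, Matrix.mul_apply, map_sum,
      sum_apply]
    exact Finset.sum_comm
  · simp only [mul_apply_eq_comp, extendMatrixCLM_apply_of_notMem _ _ _ ha]

lemma extendMatrixCLM_one : extendMatrixCLM e (1 : Matrix ι ι (E →L[𝕜] E)) = 1 := by
  simp [extendMatrixCLM, matrixCLM]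

lemma adjoint_extendMatrixCLM [CompleteSpace E] :
    adjoint (extendMatrixCLM e M) = extendMatrixCLM e (star M) := by
  rw [extendMatrixCLM, extendMatrixCLM, map_add, adjoint_matrixCLM, star_sub, star_one,
    ← star_eq_adjoint, star_one]

lemma extendMatrixCLM_mem_unitary [CompleteSpace E] {M : Matrix ι ι (E →L[𝕜] E)}
    (hM : M ∈ unitary _) : extendMatrixCLM e M ∈ unitary (ℓ²(α, E) →L[𝕜] ℓ²(α, E)) := by
  rw [Unitary.mem_iff, star_eq_adjoint, adjoint_extendMatrixCLM, ← extendMatrixCLM_mul,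
    ← extendMatrixCLM_mul, Unitary.star_mul_self_of_mem hM, Unitary.mul_star_self_of_mem hM,
    extendMatrixCLM_one]
  exact ⟨rfl, rfl⟩

end lp

namespace SzNagy

variable {H : Type*} [NormedAddCommGroup H] [InnerProductSpace ℂ H]

noncomputable def shift : ℓ²(ℤ, H) ≃ₗᵢ[ℂ] ℓ²(ℤ, H) :=
  LinearIsometryEquiv.lpCongrLeft ℂ H 2 (Equiv.addRight 1)

lemma shift_apply (x : ℓ²(ℤ, H)) (n : ℤ) : shift x n = x (n - 1) := by
  simp [shift, sub_eq_add_neg]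

def coordEmbedding : Fin 2 ↪ ℤ := Fin.valEmbedding.trans Nat.castEmbedding

variable [CompleteSpace H]

lemma shift_mem_unitary : (shift (H := H) : ℓ²(ℤ, H) →L[ℂ] ℓ²(ℤ, H)) ∈ unitary _ := by
  rw [Unitary.mem_iff, star_eq_adjoint, LinearIsometryEquiv.adjoint_eq_symm]
  constructor <;> ext1 x <;> simp

noncomputable def schaefferUnitary (T : H →L[ℂ] H) : ℓ²(ℤ, H) →L[ℂ] ℓ²(ℤ, H) :=
  lp.extendMatrixCLM coordEmbedding (juliaMatrix T) * (shift (H := H) : ℓ²(ℤ, H) →L[ℂ] ℓ²(ℤ, H))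

lemma schaefferUnitary_mem_unitary {T : H →L[ℂ] H} (hT : ‖T‖ ≤ 1) :
    schaefferUnitary T ∈ unitary _ :=
  Submonoid.mul_mem _ (lp.extendMatrixCLM_mem_unitary _ (juliaMatrix_mem_unitary hT))
    shift_mem_unitary

variable (T : H →L[ℂ] H) (x : ℓ²(ℤ, H))

lemma schaefferUnitary_apply_of_neg {m : ℤ} (hm : m < 0) :
    schaefferUnitary T x m = x (m - 1) := by
  have hm' : m ∉ Set.range coordEmbedding := by
    rintro ⟨i, rfl⟩
    simp only [coordEmbedding, Function.Embedding.trans_apply, Fin.valEmbedding_apply,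
      Nat.castEmbedding_apply] at hm
    omega
  rw [schaefferUnitary, mul_apply_eq_comp, lp.extendMatrixCLM_apply_of_notMem _ _ _ hm']
  exact shift_apply x m

lemma schaefferUnitary_apply_zero :
    schaefferUnitary T x 0 = defect (star T) (x (-1)) + T (x 0) :=
  calc schaefferUnitary T x 0
      = lp.extendMatrixCLM coordEmbedding (juliaMatrix T) (shift x) (coordEmbedding 0) := rfl
    _ = ∑ j, juliaMatrix T 0 j (shift x (coordEmbedding j)) := lp.extendMatrixCLM_apply_self ..
    _ = defect (star T) (x (-1)) + T (x 0) := by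
      simp [Fin.sum_univ_two, juliaMatrix, coordEmbedding, shift_apply]

lemma schaefferUnitary_pow_single (n : ℕ) (h : H) :
    (∀ m < 0, (schaefferUnitary T ^ n) (lp.single 2 0 h) m = 0) ∧
      (schaefferUnitary T ^ n) (lp.single 2 0 h) 0 = (T ^ n) h := by
  induction n with
  | zero => exact ⟨fun m hm => by simp [hm.ne], by simp⟩
  | succ n ih =>
    rw [pow_succ', mul_apply_eq_comp, pow_succ', mul_apply_eq_comp]
    refine ⟨fun m hm => ?_, ?_⟩
    · rw [schaefferUnitary_apply_of_neg _ _ hm, ih.1 _ (by omega)]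
    · rw [schaefferUnitary_apply_zero, ih.1 _ (by norm_num), ih.2, map_zero, zero_add]

end SzNagy

/-- Sz.-Nagy dilation theorem: every contraction `T` on a Hilbert space `H`
admits a unitary dilation: there are a Hilbert space `K`, an isometric embedding
`V : H → K` (realizing `H` as a closed subspace of `K`, with `adjoint V` playing the role
of the orthogonal projection `P_H`), and a unitary `U` on `K` with
`Tⁿ = P_H Uⁿ |_H` for all n ∈ ℤ₊. -/
theorem stmt12 {H : Type} [NormedAddCommGroup H] [InnerProductSpace ℂ H] [CompleteSpace H]
    (T : H →L[ℂ] H) (hT : ‖T‖ ≤ 1) :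
    ∃ (K : Type) (_ : NormedAddCommGroup K) (_ : InnerProductSpace ℂ K) (_ : CompleteSpace K)
      (V : H →L[ℂ] K) (U : K →L[ℂ] K),
      (∀ x : H, ‖V x‖ = ‖x‖)
      ∧ ContinuousLinearMap.adjoint U * U = 1
      ∧ U * ContinuousLinearMap.adjoint U = 1
      ∧ ∀ n : ℕ, T ^ n = ContinuousLinearMap.adjoint V ∘L (U ^ n) ∘L V := by
  have hU := SzNagy.schaefferUnitary_mem_unitary hT
  refine ⟨ℓ²(ℤ, H), inferInstance, inferInstance, inferInstance,
    lp.singleContinuousLinearMap ℂ (fun _ => H) 2 0, SzNagy.schaefferUnitary T,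
    fun x => ?_, ?_, ?_, fun n => ?_⟩
  · exact lp.norm_single (E := fun _ : ℤ => H) (by norm_num) 0 x
  · rw [← star_eq_adjoint]
    exact Unitary.star_mul_self_of_mem hU
  · rw [← star_eq_adjoint]
    exact Unitary.mul_star_self_of_mem hU
  · ext1 x
    rw [lp.adjoint_singleContinuousLinearMap]
    exact (SzNagy.schaefferUnitary_pow_single T n x).2.symm
end

section
/- Let f be continuous on the closed bidisk D̄² ⊂ ℂ² and holomorphic on the open bidisk D². Let 0<q<1 and let X ⊆ 𝕋² be a subset of the torus such that sup over the set ⋃_{k≥0} qᵏ·X of |f| equals sup_{D²} |f|. If additionally sup_{⋃_{k≥0} qᵏ X̄} |f| = sup_{D̄²} |f| for every such f, then the closure of X contains 𝕋² (since 𝕋² is the Shilov boundary of the bidisk algebra), i.e. X is dense in 𝕋². -/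
/-!
For a point `p` of the torus, `z ↦ ((1 + z₁ p̄₁)/2) · ((1 + z₂ p̄₂)/2)` is in the bidisk algebra,
has modulus at most `1` on the closed bidisk and equals `1` at `p`. Each factor has modulus
at most `(1 + q)/2` on the disk of radius `q`, and on the circle its modulus is
`√(1 - |z - w|²/4)`. So if `p` had distance `ε > 0` from `X`, the modulus would stay below
`max ((1 + q)/2) (1 - ε²/8) < 1` on `⋃ₖ qᵏ X`, contradicting the hypothesis.
-/

open ComplexConjugate

noncomputable section

namespace Bidisk

def peak (w z : ℂ) : ℂ := (1 + z * conj w) / 2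

def bipeak (p z : ℂ × ℂ) : ℂ := peak p.1 z.1 * peak p.2 z.2

lemma peak_self {w : ℂ} (hw : ‖w‖ = 1) : peak w w = 1 := by
  rw [peak, Complex.mul_conj, Complex.normSq_eq_norm_sq, hw]
  norm_num

lemma norm_peak_le {w z : ℂ} {c : ℝ} (hw : ‖w‖ ≤ 1) (hz : ‖z‖ ≤ c) :
    ‖peak w z‖ ≤ (1 + c) / 2 := by
  rw [peak, norm_div, Complex.norm_two]
  gcongr
  calc ‖1 + z * conj w‖ ≤ 1 + ‖z‖ * ‖w‖ := by
        simpa [Complex.norm_conj] using norm_add_le (1 : ℂ) (z * conj w)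
    _ ≤ 1 + c := by nlinarith [norm_nonneg z, norm_nonneg w]

lemma norm_peak_sq_add_norm_sub_sq {w z : ℂ} (hw : ‖w‖ = 1) (hz : ‖z‖ = 1) :
    ‖peak w z‖ ^ 2 + ‖z - w‖ ^ 2 / 4 = 1 := by
  have hpeak : peak w z = (z + w) * conj w / 2 := by
    rw [peak, add_mul, Complex.mul_conj, Complex.normSq_eq_norm_sq, hw]
    push_cast
    ring
  have := parallelogram_law_with_norm ℝ z w
  rw [hz, hw] at this
  rw [hpeak, norm_div, norm_mul, Complex.norm_conj, hw, Complex.norm_two]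
  nlinarith

lemma norm_peak_le_one_sub {w z : ℂ} (hw : ‖w‖ = 1) (hz : ‖z‖ = 1) :
    ‖peak w z‖ ≤ 1 - ‖z - w‖ ^ 2 / 8 := by
  -- `a ≤ (1 + a²) / 2`
  nlinarith [norm_peak_sq_add_norm_sub_sq hw hz, sq_nonneg (‖peak w z‖ - 1)]

lemma continuous_bipeak (p : ℂ × ℂ) : Continuous (bipeak p) := by
  unfold bipeak peak
  fun_prop

lemma differentiable_bipeak (p : ℂ × ℂ) : Differentiable ℂ (bipeak p) := by
  unfold bipeak peak
  fun_prop

lemma bipeak_self {p : ℂ × ℂ} (hp : ‖p.1‖ = 1 ∧ ‖p.2‖ = 1) : bipeak p p = 1 := by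
  rw [bipeak, peak_self hp.1, peak_self hp.2, one_mul]

lemma norm_bipeak_le {p z : ℂ × ℂ} {c : ℝ} (hp : ‖p.1‖ ≤ 1 ∧ ‖p.2‖ ≤ 1)
    (hz₁ : ‖z.1‖ ≤ c) (hz₂ : ‖z.2‖ ≤ 1) : ‖bipeak p z‖ ≤ (1 + c) / 2 := by
  rw [bipeak, norm_mul]
  calc ‖peak p.1 z.1‖ * ‖peak p.2 z.2‖ ≤ (1 + c) / 2 * ((1 + 1) / 2) :=
        mul_le_mul (norm_peak_le hp.1 hz₁) (norm_peak_le hp.2 hz₂) (norm_nonneg _)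
          (by linarith [norm_nonneg z.1])
    _ = (1 + c) / 2 := by ring

lemma norm_bipeak_le_of_le_dist {p x : ℂ × ℂ} {ε : ℝ} (hp : ‖p.1‖ = 1 ∧ ‖p.2‖ = 1)
    (hx : ‖x.1‖ = 1 ∧ ‖x.2‖ = 1) (hε : 0 ≤ ε) (hpx : ε ≤ dist p x) :
    ‖bipeak p x‖ ≤ 1 - ε ^ 2 / 8 := by
  have hfar : ∀ {w z : ℂ}, ‖w‖ = 1 → ‖z‖ = 1 → ε ≤ dist w z → ‖peak w z‖ ≤ 1 - ε ^ 2 / 8 :=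
    fun hw hz hwz => (norm_peak_le_one_sub hw hz).trans <| by
      rw [dist_comm, dist_eq_norm] at hwz
      nlinarith
  have hle_one : ∀ {w z : ℂ}, ‖w‖ = 1 → ‖z‖ = 1 → ‖peak w z‖ ≤ 1 := fun hw hz => by
    simpa using norm_peak_le hw.le hz.le
  rw [Prod.dist_eq] at hpx
  rw [bipeak, norm_mul]
  rcases le_max_iff.mp hpx with h₁ | h₂
  · simpa using mul_le_mul (hfar hp.1 hx.1 h₁) (hle_one hp.2 hx.2) (norm_nonneg _)
      (by nlinarith [norm_nonneg (peak p.1 x.1), hfar hp.1 hx.1 h₁])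
  · simpa using mul_le_mul (hle_one hp.1 hx.1) (hfar hp.2 hx.2 h₂) (norm_nonneg _) zero_le_one

lemma norm_bipeak_orbit_le {q ε : ℝ} {p x : ℂ × ℂ} (hq0 : 0 < q) (hq1 : q < 1)
    (hp : ‖p.1‖ = 1 ∧ ‖p.2‖ = 1) (hx : ‖x.1‖ = 1 ∧ ‖x.2‖ = 1) (hε : 0 ≤ ε)
    (hpx : ε ≤ dist p x) (k : ℕ) :
    ‖bipeak p (((q ^ k : ℝ) : ℂ) * x.1, ((q ^ k : ℝ) : ℂ) * x.2)‖
      ≤ max ((1 + q) / 2) (1 - ε ^ 2 / 8) := by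
  rcases k.eq_zero_or_pos with rfl | hk
  · simpa using le_max_of_le_right (norm_bipeak_le_of_le_dist hp hx hε hpx)
  · have hqk : ‖((q ^ k : ℝ) : ℂ)‖ ≤ q := by
      rw [Complex.norm_real, Real.norm_of_nonneg (by positivity)]
      exact pow_le_of_le_one hq0.le hq1.le hk.ne'
    refine le_max_of_le_left (norm_bipeak_le ⟨hp.1.le, hp.2.le⟩ ?_ ?_)
    · simpa [norm_mul, hx.1] using hqk
    · simpa [norm_mul, hx.2] using hqk.trans hq1.le

end Bidisk

end

open Bidisk in
/-- Let X ⊆ 𝕋² be such that for every function f continuous on the closed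
bidisk and holomorphic on the open bidisk, `sup_{⋃_{k≥0} qᵏX} |f| = sup_{D̄²} |f|`.
Then the closure of X contains 𝕋² (𝕋² being the Shilov boundary of the bidisk algebra),
i.e. X is dense in 𝕋². -/
theorem stmt13 (q : ℝ) (hq0 : 0 < q) (hq1 : q < 1)
    (X : Set (ℂ × ℂ))
    (hX : X ⊆ {p : ℂ × ℂ | ‖p.1‖ = 1 ∧ ‖p.2‖ = 1})
    (hf : ∀ f : ℂ × ℂ → ℂ,
      ContinuousOn f {p : ℂ × ℂ | ‖p.1‖ ≤ 1 ∧ ‖p.2‖ ≤ 1} →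
      DifferentiableOn ℂ f {p : ℂ × ℂ | ‖p.1‖ < 1 ∧ ‖p.2‖ < 1} →
      sSup ((fun p => ‖f p‖) ''
          ⋃ k : ℕ, (fun p : ℂ × ℂ => (((q ^ k : ℝ) : ℂ) * p.1, ((q ^ k : ℝ) : ℂ) * p.2)) '' X)
        = sSup ((fun p => ‖f p‖) ''
            {p : ℂ × ℂ | ‖p.1‖ ≤ 1 ∧ ‖p.2‖ ≤ 1})) :
    {p : ℂ × ℂ | ‖p.1‖ = 1 ∧ ‖p.2‖ = 1} ⊆ closure X := by
  intro p hp
  by_contra hpX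
  obtain ⟨ε, hε, hsep⟩ : ∃ ε > 0, ∀ x ∈ X, ε ≤ dist p x := by
    simpa [Metric.mem_closure_iff] using hpX
  have horbit : sSup ((fun z => ‖bipeak p z‖) ''
      ⋃ k : ℕ, (fun z : ℂ × ℂ => (((q ^ k : ℝ) : ℂ) * z.1, ((q ^ k : ℝ) : ℂ) * z.2)) '' X)
      ≤ max ((1 + q) / 2) (1 - ε ^ 2 / 8) := by
    refine Real.sSup_le ?_ (le_max_of_le_left (by linarith))
    rintro _ ⟨_, hz, rfl⟩
    obtain ⟨k, x, hxX, rfl⟩ := Set.mem_iUnion.mp hz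
    exact norm_bipeak_orbit_le hq0 hq1 hp (hX hxX) hε.le (hsep x hxX) k
  have hdisk : 1 ≤ sSup ((fun z => ‖bipeak p z‖) '' {z : ℂ × ℂ | ‖z.1‖ ≤ 1 ∧ ‖z.2‖ ≤ 1}) := by
    refine le_csSup ⟨1, ?_⟩ ⟨p, ⟨hp.1.le, hp.2.le⟩, by simp [bipeak_self hp]⟩
    rintro _ ⟨z, hz, rfl⟩
    simpa using norm_bipeak_le ⟨hp.1.le, hp.2.le⟩ hz.1 hz.2
  have hsup := hf (bipeak p) (continuous_bipeak p).continuousOn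
    (differentiable_bipeak p).differentiableOn
  have : max ((1 + q) / 2) (1 - ε ^ 2 / 8) < 1 := max_lt (by linarith) (by nlinarith)
  linarith
end
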